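/- Fix n, p ≥ 1, β ∈ ℝᵖ and σ² > 0. Let X be an n×p random matrix with i.i.d. N(0,1) entries, let ε be a random vector in ℝⁿ, independent of X, with i.i.d. N(0, σ²) entries, and set Y = Xβ + ε. Define Dicker's estimator σ̂²_Dicker = ((p + n + 1)/(n(n + 1)))·‖Y‖² − (1/(n(n + 1)))·‖Xᵀ Y‖². Then σ̂²_Dicker is unbiased: E[σ̂²_Dicker] = σ². -/

import Mathlib

open MeasureTheory ProbabilityTheory Real
open scoped NNReal ENNReal
set_option maxHeartbeats 1000000


lemma my_integrable_pow_mul_exp_neg_mul_sq {b : ℝ} (hb : 0 < b) (k : ℕ) :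
    Integrable fun x : ℝ => x ^ k * rexp (-b * x ^ 2) := by
  have := integrable_rpow_mul_exp_neg_mul_sq hb (s := (k : ℝ))
    (lt_of_lt_of_le (by norm_num) (Nat.cast_nonneg k))
  simpa [Real.rpow_natCast] using this

lemma my_step {b : ℝ} (hb : 0 < b) (k : ℕ) :
    ∫ x : ℝ, x ^ (k + 2) * rexp (-b * x ^ 2)
      = ((k + 1 : ℝ) / (2 * b)) * ∫ x : ℝ, x ^ k * rexp (-b * x ^ 2) := by
  have hderiv : ∀ x : ℝ, HasDerivAt (fun x : ℝ => x ^ (k+1) * rexp (-b * x ^ 2))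
      ((k+1 : ℝ) * x ^ k * rexp (-b * x ^ 2) - 2 * b * (x ^ (k+2) * rexp (-b * x ^ 2))) x := by
    intro x
    have h1 : HasDerivAt (fun x : ℝ => x ^ (k+1)) ((k+1 : ℝ) * x ^ k) x := by
      simpa using hasDerivAt_pow (k+1) x
    have h2 : HasDerivAt (fun x : ℝ => rexp (-b * x ^ 2)) (rexp (-b * x ^ 2) * (-b * (2 * x))) x := by
      have := ((hasDerivAt_pow 2 x).const_mul (-b)).exp
      simpa using this
    have := h1.mul h2
    exact this.congr_deriv (by ring)
  have hint : Integrable (fun x : ℝ => (k+1 : ℝ) * x ^ k * rexp (-b * x ^ 2)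
      - 2 * b * (x ^ (k+2) * rexp (-b * x ^ 2))) := by
    apply Integrable.sub
    · simpa [mul_assoc] using (my_integrable_pow_mul_exp_neg_mul_sq hb k).const_mul (k+1 : ℝ)
    · exact (my_integrable_pow_mul_exp_neg_mul_sq hb (k+2)).const_mul _
  have hz := integral_eq_zero_of_hasDerivAt_of_integrable hderiv hint
    (by simpa [mul_assoc] using my_integrable_pow_mul_exp_neg_mul_sq hb (k+1))
  rw [integral_sub (by simpa [mul_assoc] using (my_integrable_pow_mul_exp_neg_mul_sq hb k).const_mul (k+1 : ℝ))
    ((my_integrable_pow_mul_exp_neg_mul_sq hb (k+2)).const_mul _)] at hz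
  simp only [mul_assoc, integral_const_mul] at hz
  set I1 := ∫ x : ℝ, x ^ k * rexp (-b * x ^ 2) with hI1
  set I2 := ∫ x : ℝ, x ^ (k + 2) * rexp (-b * x ^ 2) with hI2
  have h2b : (2 : ℝ) * b ≠ 0 := by positivity
  field_simp
  linarith [hz]



lemma my_I1 {b : ℝ} (hb : 0 < b) : ∫ x : ℝ, x ^ 1 * rexp (-b * x ^ 2) = 0 := by
  have hderiv : ∀ x : ℝ, HasDerivAt (fun x : ℝ => -(2*b)⁻¹ * rexp (-b * x ^ 2))
      (x ^ 1 * rexp (-b * x ^ 2)) x := by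
    intro x
    have h2 : HasDerivAt (fun x : ℝ => rexp (-b * x ^ 2)) (rexp (-b * x ^ 2) * (-b * (2 * x))) x := by
      simpa using ((hasDerivAt_pow 2 x).const_mul (-b)).exp
    have hd := h2.const_mul (-(2*b)⁻¹)
    have : (2*b) ≠ 0 := by positivity
    exact hd.congr_deriv (by field_simp)
  exact integral_eq_zero_of_hasDerivAt_of_integrable hderiv
    (my_integrable_pow_mul_exp_neg_mul_sq hb 1)
    ((integrable_exp_neg_mul_sq hb).const_mul _)

lemma my_pdf_eq {v : ℝ≥0} (x : ℝ) :
    gaussianPDFReal 0 v x = (√(2 * π * v))⁻¹ * rexp (-(2 * (v:ℝ))⁻¹ * x ^ 2) := by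
  rw [gaussianPDFReal]
  ring_nf

lemma my_integrable_pow_gaussianReal {v : ℝ≥0} (hv : v ≠ 0) (k : ℕ) :
    Integrable (fun x : ℝ => x ^ k) (gaussianReal 0 v) := by
  have hvpos : (0:ℝ) < (v:ℝ) := by positivity
  have hb : (0:ℝ) < (2 * (v:ℝ))⁻¹ := by positivity
  rw [gaussianReal_of_var_ne_zero 0 hv,
    integrable_withDensity_iff (measurable_gaussianPDF 0 v)
      (ae_of_all _ fun x => ENNReal.ofReal_lt_top)]
  have : (fun x : ℝ => x ^ k * (gaussianPDF 0 v x).toReal)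
      = fun x : ℝ => (√(2 * π * v))⁻¹ * (x ^ k * rexp (-(2 * (v:ℝ))⁻¹ * x ^ 2)) := by
    funext x
    rw [gaussianPDF, ENNReal.toReal_ofReal (gaussianPDFReal_nonneg 0 v x), my_pdf_eq]
    ring
  rw [this]
  exact (my_integrable_pow_mul_exp_neg_mul_sq hb k).const_mul _

lemma my_integral_pow_gaussianReal {v : ℝ≥0} (hv : v ≠ 0) (k : ℕ) :
    ∫ x, x ^ k ∂gaussianReal 0 v
      = (√(2 * π * v))⁻¹ * ∫ x : ℝ, x ^ k * rexp (-(2 * (v:ℝ))⁻¹ * x ^ 2) := by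
  rw [gaussianReal_of_var_ne_zero 0 hv]
  have hd : (gaussianPDF 0 v) = fun x => ((gaussianPDFReal 0 v x).toNNReal : ℝ≥0∞) := rfl
  rw [hd, integral_withDensity_eq_integral_smul ((measurable_gaussianPDFReal 0 v).real_toNNReal)]
  have : (fun x : ℝ => (gaussianPDFReal 0 v x).toNNReal • x ^ k)
      = fun x : ℝ => (√(2 * π * v))⁻¹ * (x ^ k * rexp (-(2 * (v:ℝ))⁻¹ * x ^ 2)) := by
    funext x
    rw [NNReal.smul_def, Real.coe_toNNReal _ (gaussianPDFReal_nonneg 0 v x), my_pdf_eq, smul_eq_mul]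
    ring
  rw [this, integral_const_mul]



section moments
variable {v : ℝ≥0}

lemma my_mom1 (hv : v ≠ 0) : ∫ x, x ^ 1 ∂gaussianReal 0 v = 0 := by
  have hvpos : (0:ℝ) < (v:ℝ) := by exact_mod_cast pos_iff_ne_zero.mpr hv
  have hb : (0:ℝ) < (2 * (v:ℝ))⁻¹ := by positivity
  rw [my_integral_pow_gaussianReal hv 1, my_I1 hb, mul_zero]

lemma my_J0 (hvpos : (0:ℝ) < (v:ℝ)) :
    ∫ x : ℝ, rexp (-(2 * (v:ℝ))⁻¹ * x ^ 2) = √(2 * π * v) := by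
  have e1 : π / (2*(v:ℝ))⁻¹ = 2*π*v := by field_simp
  rw [integral_gaussian, e1]

lemma my_J2 (hvpos : (0:ℝ) < (v:ℝ)) :
    ∫ x : ℝ, x ^ 2 * rexp (-(2 * (v:ℝ))⁻¹ * x ^ 2) = (v:ℝ) * √(2 * π * v) := by
  have hb : (0:ℝ) < (2 * (v:ℝ))⁻¹ := by positivity
  nth_rewrite 1 [show (2:ℕ) = 0+2 from rfl]
  rw [my_step hb 0]
  simp only [pow_zero, one_mul, Nat.cast_zero, zero_add]
  rw [my_J0 hvpos]
  have : (1:ℝ) / (2 * (2 * (v:ℝ))⁻¹) = (v:ℝ) := by field_simp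
  rw [this]

lemma my_J4 (hvpos : (0:ℝ) < (v:ℝ)) :
    ∫ x : ℝ, x ^ 4 * rexp (-(2 * (v:ℝ))⁻¹ * x ^ 2) = 3 * (v:ℝ)^2 * √(2 * π * v) := by
  have hb : (0:ℝ) < (2 * (v:ℝ))⁻¹ := by positivity
  nth_rewrite 1 [show (4:ℕ) = 2+2 from rfl]
  rw [my_step hb 2, my_J2 hvpos]
  have : ((2:ℕ)+1 : ℝ) / (2 * (2 * (v:ℝ))⁻¹) = 3 * (v:ℝ) := by
    push_cast
    field_simp
    ring
  rw [this]
  ring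

lemma my_hc (hvpos : (0:ℝ) < (v:ℝ)) : (√(2 * π * (v:ℝ)))⁻¹ * √(2 * π * (v:ℝ)) = 1 :=
  inv_mul_cancel₀ (ne_of_gt (Real.sqrt_pos.mpr (by positivity)))

lemma my_mom2 (hv : v ≠ 0) : ∫ x, x ^ 2 ∂gaussianReal 0 v = v := by
  have hvpos : (0:ℝ) < (v:ℝ) := by exact_mod_cast pos_iff_ne_zero.mpr hv
  rw [my_integral_pow_gaussianReal hv 2, my_J2 hvpos]
  calc (√(2*π*(v:ℝ)))⁻¹ * ((v:ℝ) * √(2*π*(v:ℝ)))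
      = (v:ℝ) * ((√(2*π*(v:ℝ)))⁻¹ * √(2*π*(v:ℝ))) := by ring
    _ = v := by rw [my_hc hvpos, mul_one]

lemma my_mom3 (hv : v ≠ 0) : ∫ x, x ^ 3 ∂gaussianReal 0 v = 0 := by
  have hvpos : (0:ℝ) < (v:ℝ) := by exact_mod_cast pos_iff_ne_zero.mpr hv
  have hb : (0:ℝ) < (2 * (v:ℝ))⁻¹ := by positivity
  rw [my_integral_pow_gaussianReal hv 3]
  nth_rewrite 1 [show (3:ℕ) = 1+2 from rfl]
  rw [my_step hb 1, my_I1 hb, mul_zero, mul_zero]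

lemma my_mom4 (hv : v ≠ 0) : ∫ x, x ^ 4 ∂gaussianReal 0 v = 3 * (v:ℝ)^2 := by
  have hvpos : (0:ℝ) < (v:ℝ) := by exact_mod_cast pos_iff_ne_zero.mpr hv
  rw [my_integral_pow_gaussianReal hv 4, my_J4 hvpos]
  calc (√(2*π*(v:ℝ)))⁻¹ * (3 * (v:ℝ)^2 * √(2*π*(v:ℝ)))
      = 3 * (v:ℝ)^2 * ((√(2*π*(v:ℝ)))⁻¹ * √(2*π*(v:ℝ))) := by ring
    _ = 3 * (v:ℝ)^2 := by rw [my_hc hvpos, mul_one]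

end moments


section pihelp
variable {ι : Type*} [Fintype ι] [DecidableEq ι] {E : Type*} [MeasurableSpace E]
  {μ : Measure E} [IsProbabilityMeasure μ]

lemma my_pi_integral_prod (μ : Measure E) [IsProbabilityMeasure μ] (f : ι → E → ℝ) :
    ∫ x : ι → E, ∏ i, f i (x i) ∂Measure.pi (fun _ => μ) = ∏ i, ∫ x, f i x ∂μ := by
  letI : MeasureSpace E := ⟨μ⟩
  exact integral_fintype_prod_eq_prod (ι := ι) f

lemma my_pi_integrable_prod (μ : Measure E) [IsProbabilityMeasure μ] (f : ι → E → ℝ)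
    (hf : ∀ i, Integrable (f i) μ) :
    Integrable (fun x : ι → E => ∏ i, f i (x i)) (Measure.pi (fun _ => μ)) := by
  letI : MeasureSpace E := ⟨μ⟩
  exact Integrable.fintype_prod hf

lemma my_ite1_prod {i : ι} (a : ι → ℝ) :
    ∏ t, (if t = i then a t else 1) = a i := by
  rw [Finset.prod_ite_eq']; simp

lemma my_ite2_prod {i j : ι} (h : i ≠ j) (a b : ι → ℝ) :
    ∏ t, (if t = i then a t else if t = j then b t else 1) = a i * b j := by
  have key : ∀ t, (if t = i then a t else if t = j then b t else 1)
      = (if t = i then a t else 1) * (if t = j then b t else 1) := by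
    intro t
    by_cases h1 : t = i
    · subst h1; simp [h]
    · simp [h1]
  rw [Finset.prod_congr rfl (fun t _ => key t), Finset.prod_mul_distrib,
    my_ite1_prod, my_ite1_prod]

lemma my_ite3_prod {i j k : ι} (hij : i ≠ j) (hik : i ≠ k) (hjk : j ≠ k) (a b c : ι → ℝ) :
    ∏ t, (if t = i then a t else if t = j then b t else if t = k then c t else 1)
      = a i * b j * c k := by
  have key : ∀ t, (if t = i then a t else if t = j then b t else if t = k then c t else 1)
      = (if t = i then a t else 1) * ((if t = j then b t else 1) * (if t = k then c t else 1)) := by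
    intro t
    by_cases h1 : t = i
    · subst h1; simp [hij, hik]
    · by_cases h2 : t = j
      · subst h2; simp [h1, hjk]
      · simp [h1, h2]
  rw [Finset.prod_congr rfl (fun t _ => key t), Finset.prod_mul_distrib,
    Finset.prod_mul_distrib, my_ite1_prod, my_ite1_prod, my_ite1_prod, mul_assoc]

-- one coordinate
lemma my_eval1_integrable (i : ι) {f : E → ℝ} (hf : Integrable f μ) :
    Integrable (fun x : ι → E => f (x i)) (Measure.pi (fun _ => μ)) := by
  have h := my_pi_integrable_prod μ (fun t => if t = i then f else fun _ => (1:ℝ))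
    (fun t => by
      by_cases h1 : t = i
      · simpa [h1] using hf
      · simpa [h1] using (integrable_const (1:ℝ) (μ := μ)))
  refine h.congr (ae_of_all _ fun x => ?_)
  simp only [ite_apply]
  exact my_ite1_prod (fun t => f (x t))

lemma my_eval1_integral (i : ι) {f : E → ℝ} (hf : Integrable f μ) :
    ∫ x : ι → E, f (x i) ∂Measure.pi (fun _ => μ) = ∫ y, f y ∂μ := by
  have h := my_pi_integral_prod μ (fun t => if t = i then f else fun _ => (1:ℝ))
  have hl : (fun x : ι → E => ∏ t, (if t = i then f else fun _ => (1:ℝ)) (x t))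
      = fun x : ι → E => f (x i) := by
    funext x; simp only [ite_apply]; exact my_ite1_prod (fun t => f (x t))
  rw [hl] at h
  rw [h, Finset.prod_congr rfl (fun t _ => by
    split_ifs with h1 <;> simp [h1] : ∀ t ∈ Finset.univ,
      (∫ y, (if t = i then f else fun _ => (1:ℝ)) y ∂μ) = if t = i then (∫ y, f y ∂μ) else 1),
    my_ite1_prod (fun _ => ∫ y, f y ∂μ)]

-- two coordinates
lemma my_eval2_integrable {i j : ι} (h : i ≠ j) {f g : E → ℝ}
    (hf : Integrable f μ) (hg : Integrable g μ) :
    Integrable (fun x : ι → E => f (x i) * g (x j)) (Measure.pi (fun _ => μ)) := by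
  have hint := my_pi_integrable_prod μ
    (fun t => if t = i then f else if t = j then g else fun _ => (1:ℝ))
    (fun t => by
      by_cases h1 : t = i
      · simpa [h1] using hf
      · by_cases h2 : t = j
        · simpa [h1, h2, Ne.symm h] using hg
        · simpa [h1, h2] using (integrable_const (1:ℝ) (μ := μ)))
  refine hint.congr (ae_of_all _ fun x => ?_)
  simp only [ite_apply]
  exact my_ite2_prod h (fun t => f (x t)) (fun t => g (x t))

lemma my_eval2_integral {i j : ι} (h : i ≠ j) {f g : E → ℝ}
    (hf : Integrable f μ) (hg : Integrable g μ) :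
    ∫ x : ι → E, f (x i) * g (x j) ∂Measure.pi (fun _ => μ)
      = (∫ y, f y ∂μ) * ∫ y, g y ∂μ := by
  have hint := my_pi_integral_prod μ
    (fun t => if t = i then f else if t = j then g else fun _ => (1:ℝ))
  have hl : (fun x : ι → E =>
      ∏ t, (if t = i then f else if t = j then g else fun _ => (1:ℝ)) (x t))
      = fun x : ι → E => f (x i) * g (x j) := by
    funext x; simp only [ite_apply]
    exact my_ite2_prod h (fun t => f (x t)) (fun t => g (x t))
  rw [hl] at hint
  rw [hint, Finset.prod_congr rfl (fun t _ => by
    by_cases h1 : t = i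
    · simp [h1]
    · by_cases h2 : t = j <;> simp [h1, h2, Ne.symm h] : ∀ t ∈ Finset.univ,
      (∫ y, (if t = i then f else if t = j then g else fun _ => (1:ℝ)) y ∂μ)
        = if t = i then (∫ y, f y ∂μ) else if t = j then (∫ y, g y ∂μ) else 1),
    my_ite2_prod h (fun _ => ∫ y, f y ∂μ) (fun _ => ∫ y, g y ∂μ)]

-- three coordinates
lemma my_eval3_integrable {i j k : ι} (hij : i ≠ j) (hik : i ≠ k) (hjk : j ≠ k)
    {f g e : E → ℝ} (hf : Integrable f μ) (hg : Integrable g μ) (he : Integrable e μ) :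
    Integrable (fun x : ι → E => f (x i) * g (x j) * e (x k)) (Measure.pi (fun _ => μ)) := by
  have hint := my_pi_integrable_prod μ
    (fun t => if t = i then f else if t = j then g else if t = k then e else fun _ => (1:ℝ))
    (fun t => by
      by_cases h1 : t = i
      · simpa [h1] using hf
      · by_cases h2 : t = j
        · simpa [h1, h2, Ne.symm hij] using hg
        · by_cases h3 : t = k
          · simpa [h1, h2, h3, Ne.symm hik, Ne.symm hjk] using he
          · simpa [h1, h2, h3] using (integrable_const (1:ℝ) (μ := μ)))
  refine hint.congr (ae_of_all _ fun x => ?_)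
  simp only [ite_apply]
  exact my_ite3_prod hij hik hjk (fun t => f (x t)) (fun t => g (x t)) (fun t => e (x t))

lemma my_eval3_integral {i j k : ι} (hij : i ≠ j) (hik : i ≠ k) (hjk : j ≠ k)
    {f g e : E → ℝ} (hf : Integrable f μ) (hg : Integrable g μ) (he : Integrable e μ) :
    ∫ x : ι → E, f (x i) * g (x j) * e (x k) ∂Measure.pi (fun _ => μ)
      = (∫ y, f y ∂μ) * (∫ y, g y ∂μ) * ∫ y, e y ∂μ := by
  have hint := my_pi_integral_prod μ
    (fun t => if t = i then f else if t = j then g else if t = k then e else fun _ => (1:ℝ))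
  have hl : (fun x : ι → E =>
      ∏ t, (if t = i then f else if t = j then g else if t = k then e
        else fun _ => (1:ℝ)) (x t))
      = fun x : ι → E => f (x i) * g (x j) * e (x k) := by
    funext x; simp only [ite_apply]
    exact my_ite3_prod hij hik hjk (fun t => f (x t)) (fun t => g (x t)) (fun t => e (x t))
  rw [hl] at hint
  rw [hint, Finset.prod_congr rfl (fun t _ => by
    by_cases h1 : t = i
    · simp [h1]
    · by_cases h2 : t = j
      · simp [h1, h2, Ne.symm hij]
      · by_cases h3 : t = k <;> simp [h1, h2, h3, Ne.symm hik, Ne.symm hjk] : ∀ t ∈ Finset.univ,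
      (∫ y, (if t = i then f else if t = j then g else if t = k then e
        else fun _ => (1:ℝ)) y ∂μ)
        = if t = i then (∫ y, f y ∂μ) else if t = j then (∫ y, g y ∂μ)
          else if t = k then (∫ y, e y ∂μ) else 1),
    my_ite3_prod hij hik hjk (fun _ => ∫ y, f y ∂μ) (fun _ => ∫ y, g y ∂μ)
      (fun _ => ∫ y, e y ∂μ)]

end pihelp

section nu
variable {p : ℕ}

local notation "μ1" => gaussianReal 0 (1:ℝ≥0)
local notation "νp" => Measure.pi (fun _ : Fin p => gaussianReal 0 (1:ℝ≥0))

lemma gint (k : ℕ) : Integrable (fun y : ℝ => y ^ k) μ1 :=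
  my_integrable_pow_gaussianReal one_ne_zero k

lemma gid_int : Integrable (fun y : ℝ => y) μ1 := by simpa using gint 1

lemma gm1 : ∫ y, y ∂μ1 = 0 := by simpa using my_mom1 one_ne_zero
lemma gm2 : ∫ y, y ^ 2 ∂μ1 = 1 := by simpa using my_mom2 one_ne_zero
lemma gm3 : ∫ y, y ^ 3 ∂μ1 = 0 := by simpa using my_mom3 one_ne_zero
lemma gm4 : ∫ y, y ^ 4 ∂μ1 = 3 := by simpa using my_mom4 one_ne_zero

lemma nu_int2 (j k : Fin p) : Integrable (fun x : Fin p → ℝ => x j * x k) νp := by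
  by_cases h : j = k
  · subst h
    have := my_eval1_integrable (μ := μ1) j (gint 2)
    simpa [pow_two] using this
  · exact my_eval2_integrable h gid_int gid_int

lemma nu_I2 (j k : Fin p) :
    ∫ x, x j * x k ∂νp = if j = k then 1 else 0 := by
  by_cases h : j = k
  · subst h; rw [if_pos rfl]
    have := my_eval1_integral (μ := μ1) j (gint 2)
    rw [gm2] at this; simpa [pow_two] using this
  · rw [if_neg h]
    have := my_eval2_integral h gid_int gid_int
    simpa [gm1] using this

lemma nu_int21 (j k : Fin p) : Integrable (fun x : Fin p → ℝ => (x j) ^ 2 * x k) νp := by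
  by_cases h : j = k
  · subst h
    have := my_eval1_integrable (μ := μ1) j (gint 3)
    simpa [pow_succ] using this
  · exact my_eval2_integrable h (gint 2) gid_int

lemma nu_I21 (j k : Fin p) : ∫ x, (x j) ^ 2 * x k ∂νp = 0 := by
  by_cases h : j = k
  · subst h
    have := my_eval1_integral (μ := μ1) j (gint 3)
    rw [gm3] at this; simpa [pow_succ] using this
  · have := my_eval2_integral h (gint 2) gid_int
    simpa [gm1] using this

lemma nu_int211 (j k l : Fin p) :
    Integrable (fun x : Fin p → ℝ => (x j) ^ 2 * x k * x l) νp := by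
  by_cases hkl : k = l
  · subst hkl
    by_cases hjk : j = k
    · subst hjk
      have := my_eval1_integrable (μ := μ1) j (gint 4)
      simpa [pow_succ] using this
    · exact (my_eval2_integrable hjk (gint 2) (gint 2)).congr
        (ae_of_all _ fun x => by ring)
  · by_cases hjk : j = k
    · subst hjk
      have hjl : j ≠ l := hkl
      exact (my_eval2_integrable hjl (gint 3) gid_int).congr
        (ae_of_all _ fun x => by ring)
    · by_cases hjl : j = l
      · subst hjl
        exact (my_eval2_integrable hjk (gint 3) gid_int).congr
          (ae_of_all _ fun x => by ring)
      · exact my_eval3_integrable hjk hjl hkl (gint 2) gid_int gid_int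

lemma nu_I211 (j k l : Fin p) :
    ∫ x, (x j) ^ 2 * x k * x l ∂νp
      = if k = l then (if j = k then 3 else 1) else 0 := by
  by_cases hkl : k = l
  · subst hkl
    rw [if_pos rfl]
    by_cases hjk : j = k
    · subst hjk; rw [if_pos rfl]
      have := my_eval1_integral (μ := μ1) j (gint 4)
      rw [gm4] at this; simpa [pow_succ] using this
    · rw [if_neg hjk]
      have h2 := my_eval2_integral hjk (gint 2) (gint 2)
      have hfun : (fun x : Fin p → ℝ => (x j) ^ 2 * x k * x k)
          = fun x : Fin p → ℝ => (x j) ^ 2 * (x k) ^ 2 := by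
        funext x; ring
      rw [hfun]
      simpa [gm2] using h2
  · rw [if_neg hkl]
    by_cases hjk : j = k
    · subst hjk
      have hjl : j ≠ l := hkl
      have h2 := my_eval2_integral hjl (gint 3) gid_int
      have hfun : (fun x : Fin p → ℝ => (x j) ^ 2 * x j * x l)
          = fun x : Fin p → ℝ => (x j) ^ 3 * x l := by
        funext x; ring
      rw [hfun]
      simpa [gm3] using h2
    · by_cases hjl : j = l
      · subst hjl
        have h2 := my_eval2_integral hjk (gint 3) gid_int
        have hfun : (fun x : Fin p → ℝ => (x j) ^ 2 * x k * x j)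
            = fun x : Fin p → ℝ => (x j) ^ 3 * x k := by
          funext x; ring
        rw [hfun]
        simpa [gm3] using h2
      · have h3 := my_eval3_integral hjk hjl hkl (gint 2) gid_int gid_int
        simpa [gm1] using h3

end nu

section Slevel
variable {p : ℕ} (β : Fin p → ℝ)

local notation "μ1" => gaussianReal 0 (1:ℝ≥0)
local notation "νp" => Measure.pi (fun _ : Fin p => gaussianReal 0 (1:ℝ≥0))

lemma nu_int1 (j : Fin p) : Integrable (fun x : Fin p → ℝ => x j) νp :=
  my_eval1_integrable j gid_int

lemma nu_I1 (j : Fin p) : ∫ x, x j ∂νp = 0 := by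
  have := my_eval1_integral (μ := μ1) j gid_int
  rw [gm1] at this; exact this

lemma nu_int1sq (j : Fin p) : Integrable (fun x : Fin p → ℝ => (x j) ^ 2) νp :=
  my_eval1_integrable j (gint 2)

lemma nu_I1sq (j : Fin p) : ∫ x, (x j) ^ 2 ∂νp = 1 := by
  have := my_eval1_integral (μ := μ1) j (gint 2)
  rw [gm2] at this; exact this

lemma nuS_int : Integrable (fun x : Fin p → ℝ => ∑ k, x k * β k) νp :=
  integrable_finset_sum _ (fun k _ => (nu_int1 k).mul_const (β k))

lemma nuS_I : ∫ x, ∑ k, x k * β k ∂νp = 0 := by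
  rw [integral_finset_sum _ (fun k _ => (nu_int1 k).mul_const (β k))]
  refine Finset.sum_eq_zero fun k _ => ?_
  rw [integral_mul_const, nu_I1, zero_mul]

lemma nuS2_exp : (fun x : Fin p → ℝ => (∑ k, x k * β k) ^ 2)
    = fun x => ∑ k, ∑ l, (β k * β l) * (x k * x l) := by
  funext x
  rw [sq, Finset.sum_mul_sum]
  exact Finset.sum_congr rfl fun k _ => Finset.sum_congr rfl fun l _ => by ring

lemma nuS2_int : Integrable (fun x : Fin p → ℝ => (∑ k, x k * β k) ^ 2) νp := by
  rw [nuS2_exp]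
  exact integrable_finset_sum _ (fun k _ => integrable_finset_sum _
    (fun l _ => (nu_int2 k l).const_mul _))

lemma nuS2_I : ∫ x, (∑ k, x k * β k) ^ 2 ∂νp = ∑ k, (β k) ^ 2 := by
  rw [nuS2_exp, integral_finset_sum _ (fun k _ => integrable_finset_sum _
    (fun l _ => (nu_int2 k l).const_mul _))]
  refine Finset.sum_congr rfl fun k _ => ?_
  rw [integral_finset_sum _ (fun l _ => (nu_int2 k l).const_mul _)]
  have : ∀ l, ∫ x, (β k * β l) * (x k * x l) ∂νp
      = (β k * β l) * if k = l then 1 else 0 := by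
    intro l; rw [integral_const_mul, nu_I2]
  simp only [this, mul_ite, mul_one, mul_zero]
  rw [Finset.sum_ite_eq Finset.univ k (fun l => β k * β l)]
  simp [sq]

lemma nuxS_exp (j : Fin p) : (fun x : Fin p → ℝ => x j * ∑ k, x k * β k)
    = fun x => ∑ k, β k * (x j * x k) := by
  funext x
  rw [Finset.mul_sum]
  exact Finset.sum_congr rfl fun k _ => by ring

lemma nuxS_int (j : Fin p) :
    Integrable (fun x : Fin p → ℝ => x j * ∑ k, x k * β k) νp := by
  rw [nuxS_exp]
  exact integrable_finset_sum _ (fun k _ => (nu_int2 j k).const_mul _)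

lemma nuxS_I (j : Fin p) : ∫ x, x j * ∑ k, x k * β k ∂νp = β j := by
  rw [nuxS_exp, integral_finset_sum _ (fun k _ => (nu_int2 j k).const_mul _)]
  have : ∀ k, ∫ x, β k * (x j * x k) ∂νp = β k * if j = k then 1 else 0 := by
    intro k; rw [integral_const_mul, nu_I2]
  simp only [this, mul_ite, mul_one, mul_zero]
  rw [Finset.sum_ite_eq Finset.univ j β]
  simp

lemma nux2S_exp (j : Fin p) : (fun x : Fin p → ℝ => (x j) ^ 2 * ∑ k, x k * β k)
    = fun x => ∑ k, β k * ((x j) ^ 2 * x k) := by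
  funext x
  rw [Finset.mul_sum]
  exact Finset.sum_congr rfl fun k _ => by ring

lemma nux2S_int (j : Fin p) :
    Integrable (fun x : Fin p → ℝ => (x j) ^ 2 * ∑ k, x k * β k) νp := by
  rw [nux2S_exp]
  exact integrable_finset_sum _ (fun k _ => (nu_int21 j k).const_mul _)

lemma nux2S_I (j : Fin p) : ∫ x, (x j) ^ 2 * ∑ k, x k * β k ∂νp = 0 := by
  rw [nux2S_exp, integral_finset_sum _ (fun k _ => (nu_int21 j k).const_mul _)]
  refine Finset.sum_eq_zero fun k _ => ?_
  rw [integral_const_mul, nu_I21, mul_zero]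

lemma nux2S2_exp (j : Fin p) :
    (fun x : Fin p → ℝ => (x j) ^ 2 * (∑ k, x k * β k) ^ 2)
    = fun x => ∑ k, ∑ l, (β k * β l) * ((x j) ^ 2 * x k * x l) := by
  funext x
  rw [sq (∑ k, x k * β k), Finset.sum_mul_sum, Finset.mul_sum]
  refine Finset.sum_congr rfl fun k _ => ?_
  rw [Finset.mul_sum]
  exact Finset.sum_congr rfl fun l _ => by ring

lemma nux2S2_int (j : Fin p) :
    Integrable (fun x : Fin p → ℝ => (x j) ^ 2 * (∑ k, x k * β k) ^ 2) νp := by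
  rw [nux2S2_exp]
  exact integrable_finset_sum _ (fun k _ => integrable_finset_sum _
    (fun l _ => (nu_int211 j k l).const_mul _))

lemma nux2S2_I (j : Fin p) :
    ∫ x, (x j) ^ 2 * (∑ k, x k * β k) ^ 2 ∂νp
      = (∑ k, (β k) ^ 2) + 2 * (β j) ^ 2 := by
  have hstep : ∀ k, ∫ x, ∑ l, (β k * β l) * ((x j) ^ 2 * x k * x l) ∂νp
      = (β k) ^ 2 * if j = k then 3 else 1 := by
    intro k
    rw [integral_finset_sum _ (fun l _ => (nu_int211 j k l).const_mul _)]
    have : ∀ l, ∫ x, (β k * β l) * ((x j) ^ 2 * x k * x l) ∂νp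
        = (β k * β l) * if k = l then (if j = k then 3 else 1) else 0 := by
      intro l; rw [integral_const_mul, nu_I211]
    simp only [this, mul_ite, mul_zero, mul_one]
    rw [Finset.sum_ite_eq Finset.univ k
      (fun l => if j = k then β k * β l * 3 else β k * β l)]
    simp only [Finset.mem_univ, if_true]
    split_ifs <;> ring
  rw [nux2S2_exp, integral_finset_sum _ (fun k _ => integrable_finset_sum _
    (fun l _ => (nu_int211 j k l).const_mul _))]
  simp only [hstep]
  have : ∀ k, (β k) ^ 2 * (if j = k then (3:ℝ) else 1)
      = (β k) ^ 2 + if j = k then 2 * (β k) ^ 2 else 0 := by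
    intro k; split_ifs <;> ring
  simp only [this]
  rw [Finset.sum_add_distrib, Finset.sum_ite_eq Finset.univ j (fun k => 2 * (β k) ^ 2)]
  simp

end Slevel

section rho
variable {p : ℕ} (β : Fin p → ℝ) {V : ℝ≥0} (hV : V ≠ 0)

local notation "νp" => Measure.pi (fun _ : Fin p => gaussianReal 0 (1:ℝ≥0))
local notation "γV" => gaussianReal 0 V
local notation "ρV" => Measure.prod (Measure.pi (fun _ : Fin p => gaussianReal 0 (1:ℝ≥0))) (gaussianReal 0 V)

include hV

lemma eint1 : Integrable (fun y : ℝ => y) γV := by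
  simpa using my_integrable_pow_gaussianReal hV 1
lemma eint2 : Integrable (fun y : ℝ => y ^ 2) γV := my_integrable_pow_gaussianReal hV 2
lemma em2 : ∫ y, y ^ 2 ∂γV = (V : ℝ) := by simpa using my_mom2 hV

-- pieces
lemma rp_i1 : Integrable (fun r : (Fin p → ℝ) × ℝ => (∑ k, r.1 k * β k) ^ 2) ρV := by
  have := (nuS2_int β).mul_prod (integrable_const (1:ℝ) (μ := γV))
  simpa using this

lemma rp_i2 : Integrable (fun r : (Fin p → ℝ) × ℝ => (∑ k, r.1 k * β k) * r.2) ρV :=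
  (nuS_int β).mul_prod (eint1 hV)

lemma rp_i3 : Integrable (fun r : (Fin p → ℝ) × ℝ => r.2 ^ 2) ρV := by
  have := (integrable_const (1:ℝ) (μ := νp)).mul_prod (eint2 hV)
  simpa using this

lemma rp_I1 : ∫ r, (∑ k, r.1 k * β k) ^ 2 ∂ρV = ∑ k, (β k) ^ 2 := by
  have := integral_prod_mul (μ := νp) (ν := γV)
    (f := fun x => (∑ k, x k * β k) ^ 2) (g := fun _ => (1:ℝ))
  simp only [mul_one] at this
  rw [this, nuS2_I]
  simp

lemma rp_I2 : ∫ r, (∑ k, r.1 k * β k) * r.2 ∂ρV = 0 := by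
  have := integral_prod_mul (μ := νp) (ν := γV)
    (f := fun x => ∑ k, x k * β k) (g := fun y => y)
  rw [this, nuS_I, zero_mul]

lemma rp_I3 : ∫ r, r.2 ^ 2 ∂ρV = (V : ℝ) := by
  have := integral_prod_mul (μ := νp) (ν := γV)
    (f := fun _ => (1:ℝ)) (g := fun y => y ^ 2)
  simp only [one_mul] at this
  rw [this, em2 hV]
  simp

lemma rowY2_int : Integrable (fun r : (Fin p → ℝ) × ℝ => (∑ j, r.1 j * β j + r.2) ^ 2) ρV :=
  (((rp_i1 β hV).add ((rp_i2 β hV).const_mul 2)).add (rp_i3 hV)).congr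
    (ae_of_all _ fun r => by simp only [Pi.add_apply]; ring)

lemma rowY2_I : ∫ r, (∑ j, r.1 j * β j + r.2) ^ 2 ∂ρV = (∑ k, (β k) ^ 2) + (V : ℝ) := by
  have hfun : (fun r : (Fin p → ℝ) × ℝ => (∑ j, r.1 j * β j + r.2) ^ 2)
      = fun r => ((∑ k, r.1 k * β k) ^ 2 + 2 * ((∑ k, r.1 k * β k) * r.2)) + r.2 ^ 2 :=
    funext fun r => by ring
  have hi12 : Integrable (fun r : (Fin p → ℝ) × ℝ =>
      (∑ k, r.1 k * β k) ^ 2 + 2 * ((∑ k, r.1 k * β k) * r.2)) ρV :=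
    (rp_i1 β hV).add ((rp_i2 β hV).const_mul 2)
  rw [hfun, integral_add hi12 (rp_i3 hV),
    integral_add (rp_i1 β hV) ((rp_i2 β hV).const_mul 2), integral_const_mul,
    rp_I1 β hV, rp_I2 β hV, rp_I3 hV]
  ring

-- pieces for g_j
lemma rg_i1 (j : Fin p) :
    Integrable (fun r : (Fin p → ℝ) × ℝ => r.1 j * ∑ k, r.1 k * β k) ρV := by
  have := (nuxS_int β j).mul_prod (integrable_const (1:ℝ) (μ := γV))
  simpa using this

lemma rg_i2 (j : Fin p) : Integrable (fun r : (Fin p → ℝ) × ℝ => r.1 j * r.2) ρV :=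
  (nu_int1 j).mul_prod (eint1 hV)

lemma rowg_int (j : Fin p) :
    Integrable (fun r : (Fin p → ℝ) × ℝ => r.1 j * (∑ k, r.1 k * β k + r.2)) ρV :=
  ((rg_i1 β hV j).add (rg_i2 hV j)).congr
    (ae_of_all _ fun r => by simp only [Pi.add_apply]; ring)

lemma rowg_I (j : Fin p) :
    ∫ r, r.1 j * (∑ k, r.1 k * β k + r.2) ∂ρV = β j := by
  have hfun : (fun r : (Fin p → ℝ) × ℝ => r.1 j * (∑ k, r.1 k * β k + r.2))
      = fun r => (r.1 j * ∑ k, r.1 k * β k) + r.1 j * r.2 := funext fun r => by ring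
  have h1 : ∫ r, r.1 j * ∑ k, r.1 k * β k ∂ρV = β j := by
    have := integral_prod_mul (μ := νp) (ν := γV)
      (f := fun x => x j * ∑ k, x k * β k) (g := fun _ => (1:ℝ))
    simp only [mul_one] at this
    rw [this, nuxS_I]
    simp
  have h2 : ∫ r, r.1 j * r.2 ∂ρV = 0 := by
    have := integral_prod_mul (μ := νp) (ν := γV) (f := fun x => x j) (g := fun y => y)
    rw [this, nu_I1, zero_mul]
  rw [hfun, integral_add (rg_i1 β hV j) (rg_i2 hV j), h1, h2, add_zero]

-- pieces for g_j squared
lemma rg2_i1 (j : Fin p) :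
    Integrable (fun r : (Fin p → ℝ) × ℝ => (r.1 j) ^ 2 * (∑ k, r.1 k * β k) ^ 2) ρV := by
  have := (nux2S2_int β j).mul_prod (integrable_const (1:ℝ) (μ := γV))
  simpa using this

lemma rg2_i2 (j : Fin p) :
    Integrable (fun r : (Fin p → ℝ) × ℝ => ((r.1 j) ^ 2 * ∑ k, r.1 k * β k) * r.2) ρV :=
  (nux2S_int β j).mul_prod (eint1 hV)

lemma rg2_i3 (j : Fin p) :
    Integrable (fun r : (Fin p → ℝ) × ℝ => (r.1 j) ^ 2 * r.2 ^ 2) ρV :=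
  (nu_int1sq j).mul_prod (eint2 hV)

lemma rowg2_int (j : Fin p) :
    Integrable (fun r : (Fin p → ℝ) × ℝ => (r.1 j) ^ 2 * (∑ k, r.1 k * β k + r.2) ^ 2) ρV :=
  (((rg2_i1 β hV j).add ((rg2_i2 β hV j).const_mul 2)).add (rg2_i3 hV j)).congr
    (ae_of_all _ fun r => by simp only [Pi.add_apply]; ring)

lemma rowg2_I (j : Fin p) :
    ∫ r, (r.1 j) ^ 2 * (∑ k, r.1 k * β k + r.2) ^ 2 ∂ρV
      = (∑ k, (β k) ^ 2) + 2 * (β j) ^ 2 + (V : ℝ) := by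
  have hfun : (fun r : (Fin p → ℝ) × ℝ => (r.1 j) ^ 2 * (∑ k, r.1 k * β k + r.2) ^ 2)
      = fun r => ((r.1 j) ^ 2 * (∑ k, r.1 k * β k) ^ 2
          + 2 * (((r.1 j) ^ 2 * ∑ k, r.1 k * β k) * r.2)) + (r.1 j) ^ 2 * r.2 ^ 2 :=
    funext fun r => by ring
  have hi12 : Integrable (fun r : (Fin p → ℝ) × ℝ =>
      (r.1 j) ^ 2 * (∑ k, r.1 k * β k) ^ 2
        + 2 * (((r.1 j) ^ 2 * ∑ k, r.1 k * β k) * r.2)) ρV :=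
    (rg2_i1 β hV j).add ((rg2_i2 β hV j).const_mul 2)
  have h1 : ∫ r, (r.1 j) ^ 2 * (∑ k, r.1 k * β k) ^ 2 ∂ρV
      = (∑ k, (β k) ^ 2) + 2 * (β j) ^ 2 := by
    have := integral_prod_mul (μ := νp) (ν := γV)
      (f := fun x => (x j) ^ 2 * (∑ k, x k * β k) ^ 2) (g := fun _ => (1:ℝ))
    simp only [mul_one] at this
    rw [this, nux2S2_I]
    simp
  have h2 : ∫ r, ((r.1 j) ^ 2 * ∑ k, r.1 k * β k) * r.2 ∂ρV = 0 := by
    have := integral_prod_mul (μ := νp) (ν := γV)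
      (f := fun x => (x j) ^ 2 * ∑ k, x k * β k) (g := fun y => y)
    rw [this, nux2S_I, zero_mul]
  have h3 : ∫ r, (r.1 j) ^ 2 * r.2 ^ 2 ∂ρV = (V : ℝ) := by
    have := integral_prod_mul (μ := νp) (ν := γV)
      (f := fun x => (x j) ^ 2) (g := fun y => y ^ 2)
    rw [this, nu_I1sq, em2 hV, one_mul]
  rw [hfun, integral_add hi12 (rg2_i3 hV j),
    integral_add (rg2_i1 β hV j) ((rg2_i2 β hV j).const_mul 2), integral_const_mul, h1, h2, h3]
  ring

end rho

section core
variable {n p : ℕ} (β : Fin p → ℝ) {V : ℝ≥0} (hV : V ≠ 0)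

local notation "ρV" => Measure.prod (Measure.pi (fun _ : Fin p => gaussianReal 0 (1:ℝ≥0))) (gaussianReal 0 V)
local notation "Πn" => Measure.pi (fun _ : Fin n => Measure.prod (Measure.pi (fun _ : Fin p => gaussianReal 0 (1:ℝ≥0))) (gaussianReal 0 V))

include hV

lemma coreA_int : Integrable
    (fun w : Fin n → (Fin p → ℝ) × ℝ => ∑ i, (∑ j, (w i).1 j * β j + (w i).2) ^ 2) Πn :=
  integrable_finset_sum _ fun i _ => my_eval1_integrable i (rowY2_int β hV)

lemma coreA_I : ∫ w : Fin n → (Fin p → ℝ) × ℝ,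
      ∑ i, (∑ j, (w i).1 j * β j + (w i).2) ^ 2 ∂Πn
    = n * ((∑ k, (β k) ^ 2) + (V : ℝ)) := by
  rw [integral_finset_sum _ (fun i (_ : i ∈ Finset.univ) => my_eval1_integrable i (rowY2_int β hV))]
  have hterm : ∀ i : Fin n, ∫ w : Fin n → (Fin p → ℝ) × ℝ,
      (∑ j, (w i).1 j * β j + (w i).2) ^ 2 ∂Πn = (∑ k, (β k) ^ 2) + (V : ℝ) :=
    fun i => (my_eval1_integral i (rowY2_int β hV)).trans (rowY2_I β hV)
  simp only [hterm, Finset.sum_const, Finset.card_univ, Fintype.card_fin, nsmul_eq_mul]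

lemma coreB_exp (j : Fin p) : (fun w : Fin n → (Fin p → ℝ) × ℝ =>
      (∑ i, (w i).1 j * (∑ k, (w i).1 k * β k + (w i).2)) ^ 2)
    = fun w => ∑ i, ∑ i', ((w i).1 j * (∑ k, (w i).1 k * β k + (w i).2))
        * ((w i').1 j * (∑ k, (w i').1 k * β k + (w i').2)) :=
  funext fun w => by rw [sq, Finset.sum_mul_sum]

lemma coreB_term_int (j : Fin p) (i i' : Fin n) :
    Integrable (fun w : Fin n → (Fin p → ℝ) × ℝ =>
      ((w i).1 j * (∑ k, (w i).1 k * β k + (w i).2))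
        * ((w i').1 j * (∑ k, (w i').1 k * β k + (w i').2))) Πn := by
  by_cases h : i = i'
  · subst h
    exact (my_eval1_integrable i (rowg2_int β hV j)).congr (ae_of_all _ fun w => by ring)
  · exact my_eval2_integrable h (rowg_int β hV j) (rowg_int β hV j)

lemma coreB_term_I (j : Fin p) (i i' : Fin n) :
    ∫ w : Fin n → (Fin p → ℝ) × ℝ,
      ((w i).1 j * (∑ k, (w i).1 k * β k + (w i).2))
        * ((w i').1 j * (∑ k, (w i').1 k * β k + (w i').2)) ∂Πn
    = if i = i' then (∑ k, (β k) ^ 2) + 2 * (β j) ^ 2 + (V : ℝ) else (β j) ^ 2 := by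
  by_cases h : i = i'
  · subst h
    rw [if_pos rfl]
    have hfg : (fun w : Fin n → (Fin p → ℝ) × ℝ =>
        ((w i).1 j * (∑ k, (w i).1 k * β k + (w i).2))
          * ((w i).1 j * (∑ k, (w i).1 k * β k + (w i).2)))
        = fun w => ((w i).1 j) ^ 2 * (∑ k, (w i).1 k * β k + (w i).2) ^ 2 :=
      funext fun w => by ring
    rw [hfg]
    exact (my_eval1_integral i (rowg2_int β hV j)).trans (rowg2_I β hV j)
  · rw [if_neg h, pow_two]
    have := my_eval2_integral h (rowg_int β hV j) (rowg_int β hV j)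
    rw [rowg_I β hV j] at this
    exact this

lemma coreB_int : Integrable (fun w : Fin n → (Fin p → ℝ) × ℝ =>
      ∑ j, (∑ i, (w i).1 j * (∑ k, (w i).1 k * β k + (w i).2)) ^ 2) Πn := by
  refine integrable_finset_sum _ fun j _ => ?_
  rw [coreB_exp β hV j]
  exact integrable_finset_sum _ fun i _ => integrable_finset_sum _
    fun i' _ => coreB_term_int β hV j i i'

lemma coreB_I : ∫ w : Fin n → (Fin p → ℝ) × ℝ,
      ∑ j, (∑ i, (w i).1 j * (∑ k, (w i).1 k * β k + (w i).2)) ^ 2 ∂Πn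
    = (n:ℝ)^2 * (∑ k, (β k) ^ 2)
      + n * ((p * (∑ k, (β k) ^ 2)) + (∑ k, (β k) ^ 2) + p * (V : ℝ)) := by
  have hjint : ∀ j : Fin p, Integrable (fun w : Fin n → (Fin p → ℝ) × ℝ =>
      (∑ i, (w i).1 j * (∑ k, (w i).1 k * β k + (w i).2)) ^ 2) Πn := by
    intro j; rw [coreB_exp β hV j]
    exact integrable_finset_sum _ fun i _ => integrable_finset_sum _
      fun i' _ => coreB_term_int β hV j i i'
  rw [integral_finset_sum _ (fun j _ => hjint j)]
  have hj : ∀ j : Fin p, ∫ w : Fin n → (Fin p → ℝ) × ℝ,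
      (∑ i, (w i).1 j * (∑ k, (w i).1 k * β k + (w i).2)) ^ 2 ∂Πn
      = (n:ℝ)^2 * (β j) ^ 2 + n * ((∑ k, (β k) ^ 2) + (β j) ^ 2 + (V : ℝ)) := by
    intro j
    rw [coreB_exp β hV j, integral_finset_sum _ (fun i _ => integrable_finset_sum _
      (fun i' _ => coreB_term_int β hV j i i'))]
    have h1 : ∀ i : Fin n, ∫ w : Fin n → (Fin p → ℝ) × ℝ,
        ∑ i', ((w i).1 j * (∑ k, (w i).1 k * β k + (w i).2))
          * ((w i').1 j * (∑ k, (w i').1 k * β k + (w i').2)) ∂Πn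
        = ∑ i' : Fin n, if i = i'
            then (∑ k, (β k) ^ 2) + 2 * (β j) ^ 2 + (V : ℝ) else (β j) ^ 2 := by
      intro i
      rw [integral_finset_sum _ (fun i' _ => coreB_term_int β hV j i i')]
      exact Finset.sum_congr rfl fun i' _ => coreB_term_I β hV j i i'
    simp only [h1]
    have h2 : ∀ i : Fin n, (∑ i' : Fin n, if i = i'
          then (∑ k, (β k) ^ 2) + 2 * (β j) ^ 2 + (V : ℝ) else (β j) ^ 2)
        = (n:ℝ) * (β j) ^ 2 + ((∑ k, (β k) ^ 2) + (β j) ^ 2 + (V : ℝ)) := by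
      intro i
      have hsplit : ∀ i' : Fin n, (if i = i'
            then (∑ k, (β k) ^ 2) + 2 * (β j) ^ 2 + (V : ℝ) else (β j) ^ 2)
          = (β j) ^ 2 + if i = i' then (∑ k, (β k) ^ 2) + (β j) ^ 2 + (V : ℝ) else 0 := by
        intro i'; split_ifs <;> ring
      simp only [hsplit]
      rw [Finset.sum_add_distrib, Finset.sum_const,
        Finset.sum_ite_eq Finset.univ i (fun _ => (∑ k, (β k) ^ 2) + (β j) ^ 2 + (V : ℝ))]
      simp [Finset.card_univ, nsmul_eq_mul]
    simp only [h2, Finset.sum_const, Finset.card_univ, Fintype.card_fin, nsmul_eq_mul]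
    ring
  simp only [hj]
  rw [Finset.sum_add_distrib, ← Finset.mul_sum, ← Finset.mul_sum]
  have : (∑ j : Fin p, ((∑ k, (β k) ^ 2) + (β j) ^ 2 + (V : ℝ)))
      = p * (∑ k, (β k) ^ 2) + (∑ k, (β k) ^ 2) + p * (V : ℝ) := by
    rw [Finset.sum_add_distrib, Finset.sum_add_distrib, Finset.sum_const, Finset.sum_const]
    simp [Finset.card_univ, nsmul_eq_mul]
  rw [this]

end core

/-- The law of an `n × p` random matrix with i.i.d. `N(0,1)` entries. -/
noncomputable def designLaw (n p : ℕ) : Measure (Fin n → Fin p → ℝ) :=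
  Measure.pi fun _ : Fin n => Measure.pi fun _ : Fin p => gaussianReal 0 1

/-- The joint law of `(X, ε)`: `X` an `n × p` matrix with i.i.d. `N(0,1)` entries and
`ε ∈ ℝⁿ`, independent of `X`, with i.i.d. `N(0, σ²)` entries. -/
noncomputable def jointLaw (n p : ℕ) (σ2 : ℝ) :
    Measure ((Fin n → Fin p → ℝ) × (Fin n → ℝ)) :=
  (designLaw n p).prod (Measure.pi fun _ : Fin n => gaussianReal 0 σ2.toNNReal)

/-- Dicker's estimator
`σ̂² = ((p+n+1)/(n(n+1)))‖Y‖² − (1/(n(n+1)))‖XᵀY‖²`, with `Y = Xβ + ε`, is unbiased. -/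
theorem dicker_unbiased (n p : ℕ) (hn : 1 ≤ n) (hp : 1 ≤ p)
    (β : Fin p → ℝ) (σ2 : ℝ) (hσ : 0 < σ2) :
    ∫ q, (((p : ℝ) + n + 1) / ((n : ℝ) * (n + 1))) *
          (∑ i, (∑ j, q.1 i j * β j + q.2 i) ^ 2)
        - (1 / ((n : ℝ) * (n + 1))) *
          (∑ j, (∑ i, q.1 i j * (∑ j', q.1 i j' * β j' + q.2 i)) ^ 2)
      ∂(jointLaw n p σ2) = σ2 := by
  have hV : σ2.toNNReal ≠ 0 := by
    simp only [ne_eq, Real.toNNReal_eq_zero, not_le]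
    exact hσ
  have hcoe : ((σ2.toNNReal : ℝ≥0) : ℝ) = σ2 := Real.coe_toNNReal _ hσ.le
  have hmp := measurePreserving_arrowProdEquivProdArrow (Fin p → ℝ) ℝ (Fin n)
    (fun _ => Measure.pi fun _ : Fin p => gaussianReal 0 1)
    (fun _ => gaussianReal 0 σ2.toNNReal)
  rw [show jointLaw n p σ2
      = (Measure.pi fun _ : Fin n => Measure.pi fun _ : Fin p => gaussianReal 0 1).prod
        (Measure.pi fun _ : Fin n => gaussianReal 0 σ2.toNNReal) from rfl]
  rw [← hmp.integral_comp']
  simp only [MeasurableEquiv.arrowProdEquivProdArrow, Equiv.arrowProdEquivProdArrow,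
    MeasurableEquiv.coe_mk, Equiv.coe_fn_mk]
  rw [integral_sub ((coreA_int β hV).const_mul _) ((coreB_int β hV).const_mul _),
    integral_const_mul, integral_const_mul, coreA_I β hV, coreB_I β hV, hcoe]
  have hn' : (0:ℝ) < n := by exact_mod_cast Nat.lt_of_lt_of_le Nat.zero_lt_one hn
  have h1 : (n:ℝ) ≠ 0 := ne_of_gt hn'
  have h2 : (n:ℝ) + 1 ≠ 0 := by positivity
  field_simp
  ring
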